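/- Fix β > 0. Let (N_k) be a strictly increasing sequence of integers and let J ↦ κ_J be a measurable map from the coupling space to Borel probability measures on P({−1,+1}^ℕ) such that for every s ∈ ℕ, every finite set A of pairs, every finite W ⊂ ℕ and every bounded continuous f, ∫ν(dJ) ∏_{i=1}^s G_{N_k,β,J}(dσ^i) f((J_{xy})_{(x,y)∈A}, σ^1|_W, …, σ^s|_W) → ∫ν(dJ) ∫κ_J(dΓ) ∏_{i=1}^s Γ(dσ^i) f((J_{xy})_{(x,y)∈A}, σ^1|_W, …, σ^s|_W) as k → ∞. Then for every s ∈ ℕ and every continuous F : [−1,1]^{s(s−1)/2} → ℝ, both limits lim_{k→∞} ∫ν(dJ) G_{N_k,β,J}^{⊗s}(F(R^{N_k}(σ^i,σ^j) : 1 ≤ i < j ≤ s)) and lim_{N→∞} ∫ν(dJ) ∫κ_J(dΓ) Γ^{⊗s}(F(R^{N}(σ^i,σ^j) : 1 ≤ i < j ≤ s)) exist and are equal. -/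

import Mathlib

open MeasureTheory ProbabilityTheory Filter
open scoped ENNReal

noncomputable section

/-- The spin value `±1` of a Boolean. -/
def spin (b : Bool) : ℝ := if b then 1 else -1

/-- `(1/√N) Σ_{0 ≤ x < y < N} J_{xy} σ_x σ_y`, i.e. minus the SK Hamiltonian `H_{N,J}`. -/
def skEnergy (N : ℕ) (J : ℕ × ℕ → ℝ) (σ : ℕ → Bool) : ℝ :=
  (Real.sqrt N)⁻¹ *
    ∑ p ∈ (Finset.range N ×ˢ Finset.range N).filter (fun p => p.1 < p.2),
      J p * spin (σ p.1) * spin (σ p.2)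

/-- Extend a configuration on `{0,…,N−1}` to `ℕ` by `+1`. -/
def extendN {N : ℕ} (σ : Fin N → Bool) : ℕ → Bool :=
  fun x => if h : x < N then σ ⟨x, h⟩ else true

/-- The SK Gibbs measure `G_{N,β,J}`, regarded as a measure on `{−1,+1}^ℕ`. -/
def skGibbs (N : ℕ) (β : ℝ) (J : ℕ × ℕ → ℝ) : Measure (ℕ → Bool) :=
  (∑ σ : Fin N → Bool, ENNReal.ofReal (Real.exp (β * skEnergy N J (extendN σ))))⁻¹ •
    ∑ σ : Fin N → Bool,
      ENNReal.ofReal (Real.exp (β * skEnergy N J (extendN σ))) • Measure.dirac (extendN σ)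

/-- The spin overlap `R^N(σ,σ′) = (1/N) Σ_{x<N} σ_x σ′_x`. -/
def overlapN (N : ℕ) (σ σ' : ℕ → Bool) : ℝ :=
  (N : ℝ)⁻¹ * ∑ x ∈ Finset.range N, spin (σ x) * spin (σ' x)

/-- `ν` is the product over the index set of standard Gaussians: all finite-dimensional
marginals are standard Gaussian product measures. -/
def stdGaussianProduct {ι : Type} (ν : Measure (ι → ℝ)) : Prop :=
  IsProbabilityMeasure ν ∧
    ∀ A : Finset ι, ν.map (fun J (e : ↥A) => J ↑e) = Measure.pi fun _ : ↥A => gaussianReal 0 1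

/-- The index set of pairs `1 ≤ i < j ≤ s` of replicas. -/
abbrev Pairs (s : ℕ) := {p : Fin s × Fin s // p.1 < p.2}

/-!
For each fixed `n` the function `F(R^n)` only sees the first `n` sites, so `hconv` gives
`E⟨F(R^n)⟩_{N_k} → E_κ[F(R^n)]` as `k → ∞`. Both claimed limits then exist and agree as soon as
`E⟨F(R^m)⟩_N − E⟨F(R^n)⟩_N` is small uniformly in `n ≤ m ≤ N` once `n` is large: the metastate
side inherits the estimate in the limit `k → ∞` and is Cauchy, and the diagonal is compared with it
through a fixed large `n`.

The uniform estimate comes from the invariance of the Gaussian couplings under permutations of the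
sites `{0,…,N−1}`: all correlations `E⟨σ^i_x σ^j_x σ^i_y σ^j_y⟩`, `x ≠ y`, equal one number `c`,
whence `E⟨(R^m − R^n)^2⟩ = (1 − c)(1/n − 1/m) ≤ 2/n`. Uniform continuity of `F` on the cube turns
this into `|E⟨F(R^m)⟩ − E⟨F(R^n)⟩| ≤ ε + C_ε · 2 |Pairs s| / n`.
-/

open scoped Topology

theorem exists_tendsto_diag_of_uniformCauchy {a : ℕ → ℕ → ℝ} {B : ℕ → ℝ} {N : ℕ → ℕ}
    (hN : Tendsto N atTop atTop) (hB : ∀ n, Tendsto (fun k => a k n) atTop (𝓝 (B n)))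
    (ha : ∀ ε > 0, ∃ n₀, ∀ k n m, n₀ ≤ n → n ≤ m → m ≤ N k → |a k m - a k n| ≤ ε) :
    ∃ ℓ, Tendsto (fun k => a k (N k)) atTop (𝓝 ℓ) ∧ Tendsto B atTop (𝓝 ℓ) := by
  have hB_cauchy : ∀ ε > 0, ∃ n₀, ∀ n m, n₀ ≤ n → n ≤ m → |B m - B n| ≤ ε := by
    intro ε hε
    obtain ⟨n₀, h⟩ := ha ε hε
    refine ⟨n₀, fun n m hn hm => le_of_tendsto ((hB m).sub (hB n)).abs ?_⟩
    filter_upwards [hN.eventually_ge_atTop m] with k hk using h k n m hn hm hk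
  have hB_cauchySeq : CauchySeq B := (Metric.cauchySeq_iff' (u := B)).2 fun ε hε => by
    obtain ⟨n₀, h⟩ := hB_cauchy (ε / 2) (half_pos hε)
    refine ⟨n₀, fun n hn => ?_⟩
    rw [Real.dist_eq]
    exact (h n₀ n le_rfl hn).trans_lt (half_lt_self hε)
  obtain ⟨ℓ, hℓ⟩ := cauchySeq_tendsto_of_complete hB_cauchySeq
  refine ⟨ℓ, Metric.tendsto_nhds.2 fun ε hε => ?_, hℓ⟩
  obtain ⟨n₀, h⟩ := ha (ε / 4) (by positivity)
  obtain ⟨n₁, h'⟩ := hB_cauchy (ε / 4) (by positivity)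
  set n := max n₀ n₁
  have hBn : |ℓ - B n| ≤ ε / 4 := le_of_tendsto (hℓ.sub_const _).abs <|
    eventually_atTop.2 ⟨n, fun m hm => h' n m (le_max_right _ _) hm⟩
  filter_upwards [hN.eventually_ge_atTop n, Metric.tendsto_nhds.1 (hB n) (ε / 4) (by positivity)]
    with k hk hkn
  rw [Real.dist_eq] at hkn ⊢
  have hdiag := h k n (N k) (le_max_left _ _) hk le_rfl
  calc |a k (N k) - ℓ| ≤ |a k (N k) - a k n| + |a k n - B n| + |ℓ - B n| := by
        linarith [abs_sub_le (a k (N k)) (a k n) ℓ, abs_sub_le (a k n) (B n) ℓ,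
          abs_sub_comm ℓ (B n)]
    _ < ε := by linarith

lemma exists_abs_sub_le_add_mul_sum_sq {ι : Type*} [Fintype ι] {K : Set (ι → ℝ)}
    (hK : IsCompact K) {F : (ι → ℝ) → ℝ} (hF : ContinuousOn F K) {ε : ℝ} (hε : 0 < ε) :
    ∃ c ≥ 0, ∀ u ∈ K, ∀ v ∈ K, |F u - F v| ≤ ε + c * ∑ i, (u i - v i) ^ 2 := by
  obtain ⟨C, hC⟩ := hK.exists_bound_of_continuousOn hF
  obtain ⟨δ, hδ, hδF⟩ :=
    Metric.uniformContinuousOn_iff.1 (hK.uniformContinuousOn_of_continuous hF) ε hε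
  -- Increments over distance `≥ δ` are at most `2|C|`, and `δ² ≤ ∑ i, (u i - v i)²` there.
  refine ⟨2 * |C| / δ ^ 2, by positivity, fun u hu v hv => ?_⟩
  have hsum : 0 ≤ ∑ i, (u i - v i) ^ 2 := Finset.sum_nonneg fun i _ => sq_nonneg _
  by_cases hclose : dist u v < δ
  · have := hδF u hu v hv hclose
    rw [Real.dist_eq] at this
    nlinarith [show 0 ≤ 2 * |C| / δ ^ 2 by positivity]
  obtain ⟨i, hi⟩ := not_forall.1 (mt (dist_pi_lt_iff hδ).2 hclose)
  rw [Real.dist_eq, not_lt] at hi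
  have hsq : δ ^ 2 ≤ ∑ i, (u i - v i) ^ 2 := by
    calc δ ^ 2 ≤ (u i - v i) ^ 2 := sq_abs (u i - v i) ▸ pow_le_pow_left₀ hδ.le hi 2
      _ ≤ _ := Finset.single_le_sum (fun i _ => sq_nonneg (u i - v i)) (Finset.mem_univ i)
  have hFuv : |F u - F v| ≤ 2 * |C| := by
    have hu' := hC u hu
    have hv' := hC v hv
    rw [Real.norm_eq_abs] at hu' hv'
    linarith [abs_sub (F u) (F v), le_abs_self C]
  calc |F u - F v| ≤ 2 * |C| / δ ^ 2 * δ ^ 2 := by rwa [div_mul_cancel₀ _ (by positivity)]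
    _ ≤ ε + 2 * |C| / δ ^ 2 * ∑ i, (u i - v i) ^ 2 := by
        nlinarith [show 0 ≤ 2 * |C| / δ ^ 2 by positivity]

lemma integral_comp_perm_of_map_eq_pi {ι : Type*} {ν : Measure (ι → ℝ)} {A : Finset ι}
    {γ : Measure ℝ} [SigmaFinite γ] (hν : ν.map (fun J (e : A) => J e) = Measure.pi fun _ => γ)
    (e : A ≃ A) {Φ : (A → ℝ) → ℝ} (hΦ : Measurable Φ) :
    ∫ J, Φ (fun a => J (e a)) ∂ν = ∫ J, Φ (fun a => J a) ∂ν := by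
  have hres : Measurable fun (J : ι → ℝ) (a : A) => J a :=
    measurable_pi_lambda _ fun a => measurable_pi_apply _
  have hperm : Measurable fun (c : A → ℝ) a => c (e a) :=
    measurable_pi_lambda _ fun a => measurable_pi_apply _
  have hpres := measurePreserving_piCongrLeft (fun _ : A => γ) e.symm
  rw [← integral_map (f := fun c => Φ fun a => c (e a)) hres.aemeasurable
    (hΦ.comp hperm).aestronglyMeasurable, ← integral_map hres.aemeasurable hΦ.aestronglyMeasurable,
    hν, ← hpres.integral_comp' Φ]
  simp [MeasurableEquiv.piCongrLeft, Equiv.piCongrLeft, Equiv.piCongrLeft']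

lemma exists_perm_zero_one {N x y : ℕ} (hx : x < N) (hy : y < N) (hxy : x ≠ y) :
    ∃ π : Equiv.Perm ℕ, π 0 = x ∧ π 1 = y ∧ ∀ a, N ≤ a → π a = a := by
  refine ⟨Equiv.swap 0 x * Equiv.swap 1 (Equiv.swap 0 x y), ?_, ?_, fun a ha => ?_⟩ <;>
    simp only [Equiv.Perm.mul_apply, Equiv.swap_apply_def] <;> split_ifs <;> simp_all <;> omega

lemma abs_spin (b : Bool) : |spin b| = 1 := by cases b <;> simp [spin]

lemma abs_overlapN_le (N : ℕ) (σ σ' : ℕ → Bool) : |overlapN N σ σ'| ≤ 1 := by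
  have hsum : |∑ x ∈ Finset.range N, spin (σ x) * spin (σ' x)| ≤ N := by
    refine (Finset.abs_sum_le_sum_abs _ _).trans ?_
    simp [abs_mul, abs_spin]
  rw [overlapN, abs_mul, abs_inv, Nat.abs_cast]
  exact (mul_le_mul_of_nonneg_left hsum (by positivity)).trans
    (inv_mul_le_one_of_le₀ le_rfl (Nat.cast_nonneg N))

lemma overlapN_congr {N : ℕ} {σ σ' τ τ' : ℕ → Bool} (hσ : ∀ x < N, σ x = σ' x)
    (hτ : ∀ x < N, τ x = τ' x) : overlapN N σ τ = overlapN N σ' τ' :=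
  congrArg _ <| Finset.sum_congr rfl fun x hx => by
    rw [hσ x (Finset.mem_range.1 hx), hτ x (Finset.mem_range.1 hx)]

def overlaps (s n : ℕ) (σ : Fin s → ℕ → Bool) : Pairs s → ℝ :=
  fun p => overlapN n (σ p.1.1) (σ p.1.2)

def unitCube (ι : Type*) : Set (ι → ℝ) := {g : ι → ℝ | ∀ p, g p ∈ Set.Icc (-1 : ℝ) 1}

lemma isCompact_unitCube (ι : Type*) [Finite ι] : IsCompact (unitCube ι) := by
  simpa [unitCube, Set.pi] using
    isCompact_univ_pi fun _ : ι => isCompact_Icc (a := (-1 : ℝ)) (b := 1)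

lemma overlaps_mem_unitCube (s n : ℕ) (σ : Fin s → ℕ → Bool) : overlaps s n σ ∈ unitCube _ :=
  fun _ => abs_le.1 (abs_overlapN_le n _ _)

lemma continuous_overlaps (s n : ℕ) : Continuous (overlaps s n) := by
  have hspin : Continuous spin := continuous_of_discreteTopology
  refine continuous_pi fun _ => continuous_const.mul (continuous_finsetSum _ fun x _ => ?_)
  exact (hspin.comp ((continuous_apply x).comp (continuous_apply _))).mul
    (hspin.comp ((continuous_apply x).comp (continuous_apply _)))

lemma overlaps_congr {s n : ℕ} {σ σ' : Fin s → ℕ → Bool} (h : ∀ i, ∀ x < n, σ i x = σ' i x) :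
    overlaps s n σ = overlaps s n σ' :=
  funext fun _ => overlapN_congr (h _) (h _)

section Gibbs

variable (N : ℕ) (β : ℝ) (J : ℕ × ℕ → ℝ)

def boltzmannFactor (τ : Fin N → Bool) : ℝ := Real.exp (β * skEnergy N J (extendN τ))

def gibbsWeight (τ : Fin N → Bool) : ℝ :=
  boltzmannFactor N β J τ / ∑ τ', boltzmannFactor N β J τ'

lemma boltzmannFactor_pos (τ : Fin N → Bool) : 0 < boltzmannFactor N β J τ := Real.exp_pos _

lemma sum_boltzmannFactor_pos : 0 < ∑ τ, boltzmannFactor N β J τ :=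
  Finset.sum_pos (fun τ _ => boltzmannFactor_pos N β J τ) Finset.univ_nonempty

lemma gibbsWeight_nonneg (τ : Fin N → Bool) : 0 ≤ gibbsWeight N β J τ :=
  div_nonneg (boltzmannFactor_pos N β J τ).le (sum_boltzmannFactor_pos N β J).le

lemma gibbsWeight_le_one (τ : Fin N → Bool) : gibbsWeight N β J τ ≤ 1 :=
  div_le_one_of_le₀ (Finset.single_le_sum (fun τ _ => (boltzmannFactor_pos N β J τ).le)
    (Finset.mem_univ τ)) (sum_boltzmannFactor_pos N β J).le

lemma sum_gibbsWeight : ∑ τ, gibbsWeight N β J τ = 1 := by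
  simp only [gibbsWeight]
  rw [← Finset.sum_div, div_self (sum_boltzmannFactor_pos N β J).ne']

lemma continuous_skEnergy (σ : ℕ → Bool) : Continuous fun J => skEnergy N J σ :=
  continuous_const.mul <| continuous_finsetSum _ fun p _ =>
    ((continuous_apply p).mul continuous_const).mul continuous_const

lemma continuous_gibbsWeight (τ : Fin N → Bool) : Continuous fun J => gibbsWeight N β J τ := by
  have hB : ∀ τ, Continuous fun J => boltzmannFactor N β J τ := fun τ =>
    (continuous_const.mul (continuous_skEnergy N _)).rexp
  exact (hB τ).div (continuous_finsetSum _ fun τ _ => hB τ)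
    fun J => (sum_boltzmannFactor_pos N β J).ne'

lemma measurable_extendN : Measurable (extendN : (Fin N → Bool) → ℕ → Bool) :=
  measurable_of_countable _

def gibbsFin : Measure (Fin N → Bool) :=
  ∑ τ, ENNReal.ofReal (gibbsWeight N β J τ) • Measure.dirac τ

lemma gibbsFin_singleton (τ : Fin N → Bool) :
    gibbsFin N β J {τ} = ENNReal.ofReal (gibbsWeight N β J τ) := by
  classical
  simp [gibbsFin, Measure.coe_finsetSum, Set.indicator, Finset.sum_ite_eq']

instance : IsProbabilityMeasure (gibbsFin N β J) := by
  constructor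
  simp [gibbsFin, Measure.coe_finsetSum, ← ENNReal.ofReal_sum_of_nonneg
    fun τ _ => gibbsWeight_nonneg N β J τ, sum_gibbsWeight]

lemma skGibbs_eq_map : skGibbs N β J = (gibbsFin N β J).map extendN := by
  ext A hA
  rw [Measure.map_apply (measurable_extendN N) hA]
  simp only [skGibbs, gibbsFin, Measure.smul_apply, Measure.coe_finsetSum, Finset.sum_apply,
    Measure.dirac_apply' _ hA, Measure.dirac_apply' _ (measurable_extendN N hA), smul_eq_mul,
    Finset.mul_sum, ← mul_assoc]
  refine Finset.sum_congr rfl fun τ _ => ?_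
  rw [gibbsWeight, ENNReal.ofReal_div_of_pos (sum_boltzmannFactor_pos N β J),
    ENNReal.ofReal_sum_of_nonneg fun τ _ => (boltzmannFactor_pos N β J τ).le,
    ENNReal.div_eq_inv_mul]
  rfl

def gibbsAvg (s : ℕ) (g : (Fin s → ℕ → Bool) → ℝ) : ℝ :=
  ∑ σ : Fin s → Fin N → Bool, (∏ i, gibbsWeight N β J (σ i)) * g (fun i => extendN (σ i))

lemma integral_pi_skGibbs (s : ℕ) {g : (Fin s → ℕ → Bool) → ℝ} (hg : Measurable g) :
    ∫ σ, g σ ∂(Measure.pi fun _ : Fin s => skGibbs N β J) = gibbsAvg N β J s g := by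
  simp_rw [skGibbs_eq_map]
  rw [← Measure.pi_map_pi fun _ => (measurable_extendN N).aemeasurable,
    integral_map (measurable_of_countable _).aemeasurable hg.aestronglyMeasurable,
    integral_fintype Integrable.of_finite]
  refine Finset.sum_congr rfl fun σ _ => ?_
  simp [Measure.real, gibbsFin_singleton, ENNReal.toReal_prod, gibbsWeight_nonneg]

end Gibbs

section GibbsAvg

variable {N : ℕ} {β : ℝ} {J : ℕ × ℕ → ℝ} {s : ℕ}

lemma prod_gibbsWeight_nonneg (σ : Fin s → Fin N → Bool) : 0 ≤ ∏ i, gibbsWeight N β J (σ i) :=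
  Finset.prod_nonneg fun i _ => gibbsWeight_nonneg N β J (σ i)

lemma gibbsAvg_const (c : ℝ) : gibbsAvg N β J s (fun _ => c) = c := by
  classical
  rw [gibbsAvg, ← Finset.sum_mul, ← Fintype.piFinset_univ, ← Finset.prod_univ_sum]
  simp [sum_gibbsWeight]

lemma gibbsAvg_add (g₁ g₂ : (Fin s → ℕ → Bool) → ℝ) :
    gibbsAvg N β J s (g₁ + g₂) = gibbsAvg N β J s g₁ + gibbsAvg N β J s g₂ := by
  simp only [gibbsAvg, Pi.add_apply, mul_add, Finset.sum_add_distrib]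

lemma gibbsAvg_sub (g₁ g₂ : (Fin s → ℕ → Bool) → ℝ) :
    gibbsAvg N β J s (g₁ - g₂) = gibbsAvg N β J s g₁ - gibbsAvg N β J s g₂ := by
  simp only [gibbsAvg, Pi.sub_apply, mul_sub, Finset.sum_sub_distrib]

lemma gibbsAvg_const_mul (c : ℝ) (g : (Fin s → ℕ → Bool) → ℝ) :
    gibbsAvg N β J s (fun σ => c * g σ) = c * gibbsAvg N β J s g := by
  simp only [gibbsAvg, Finset.mul_sum, mul_left_comm c]

lemma gibbsAvg_sum {α : Type*} (T : Finset α) (g : α → (Fin s → ℕ → Bool) → ℝ) :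
    gibbsAvg N β J s (fun σ => ∑ a ∈ T, g a σ) = ∑ a ∈ T, gibbsAvg N β J s (g a) := by
  simp only [gibbsAvg, Finset.mul_sum]
  exact Finset.sum_comm

lemma gibbsAvg_mono {g₁ g₂ : (Fin s → ℕ → Bool) → ℝ} (h : ∀ σ, g₁ σ ≤ g₂ σ) :
    gibbsAvg N β J s g₁ ≤ gibbsAvg N β J s g₂ :=
  Finset.sum_le_sum fun σ _ => mul_le_mul_of_nonneg_left (h _) (prod_gibbsWeight_nonneg σ)

lemma abs_gibbsAvg_le_sum_abs (g : (Fin s → ℕ → Bool) → ℝ) :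
    |gibbsAvg N β J s g| ≤ ∑ σ : Fin s → Fin N → Bool, |g (fun i => extendN (σ i))| := by
  refine (Finset.abs_sum_le_sum_abs _ _).trans (Finset.sum_le_sum fun σ _ => ?_)
  rw [abs_mul, abs_of_nonneg (prod_gibbsWeight_nonneg σ)]
  exact mul_le_of_le_one_left (abs_nonneg _) <| Finset.prod_le_one
    (fun i _ => gibbsWeight_nonneg N β J (σ i)) fun i _ => gibbsWeight_le_one N β J (σ i)

end GibbsAvg

lemma continuous_gibbsAvg (N : ℕ) (β : ℝ) (s : ℕ) (g : (Fin s → ℕ → Bool) → ℝ) :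
    Continuous fun J => gibbsAvg N β J s g :=
  continuous_finsetSum _ fun σ _ =>
    (continuous_finsetProd _ fun i _ => continuous_gibbsWeight N β (σ i)).mul continuous_const

lemma integrable_gibbsAvg {ν : Measure (ℕ × ℕ → ℝ)} [IsFiniteMeasure ν] (N : ℕ) (β : ℝ) (s : ℕ)
    (g : (Fin s → ℕ → Bool) → ℝ) : Integrable (fun J => gibbsAvg N β J s g) ν :=
  .of_bound (continuous_gibbsAvg N β s g).aestronglyMeasurable _
    (.of_forall fun _ => abs_gibbsAvg_le_sum_abs g)

/-- `E⟨g⟩_N` of the header. -/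
def quenchedAvg (ν : Measure (ℕ × ℕ → ℝ)) (N : ℕ) (β : ℝ) (s : ℕ)
    (g : (Fin s → ℕ → Bool) → ℝ) : ℝ :=
  ∫ J, gibbsAvg N β J s g ∂ν

section QuenchedAvg

variable {ν : Measure (ℕ × ℕ → ℝ)} {N : ℕ} {β : ℝ} {s : ℕ}

lemma quenchedAvg_const [IsProbabilityMeasure ν] (c : ℝ) :
    quenchedAvg ν N β s (fun _ => c) = c := by
  simp [quenchedAvg, gibbsAvg_const]

lemma quenchedAvg_const_mul (c : ℝ) (g : (Fin s → ℕ → Bool) → ℝ) :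
    quenchedAvg ν N β s (fun σ => c * g σ) = c * quenchedAvg ν N β s g := by
  simp only [quenchedAvg, gibbsAvg_const_mul]
  exact integral_const_mul c _

section Finite

variable [IsFiniteMeasure ν]

lemma quenchedAvg_add (g₁ g₂ : (Fin s → ℕ → Bool) → ℝ) :
    quenchedAvg ν N β s (g₁ + g₂) = quenchedAvg ν N β s g₁ + quenchedAvg ν N β s g₂ := by
  simp only [quenchedAvg, gibbsAvg_add]
  exact integral_add (integrable_gibbsAvg N β s g₁) (integrable_gibbsAvg N β s g₂)

lemma quenchedAvg_sub (g₁ g₂ : (Fin s → ℕ → Bool) → ℝ) :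
    quenchedAvg ν N β s (g₁ - g₂) = quenchedAvg ν N β s g₁ - quenchedAvg ν N β s g₂ := by
  simp only [quenchedAvg, gibbsAvg_sub]
  exact integral_sub (integrable_gibbsAvg N β s g₁) (integrable_gibbsAvg N β s g₂)

lemma quenchedAvg_sum {α : Type*} (T : Finset α) (g : α → (Fin s → ℕ → Bool) → ℝ) :
    quenchedAvg ν N β s (fun σ => ∑ a ∈ T, g a σ) = ∑ a ∈ T, quenchedAvg ν N β s (g a) := by
  simp only [quenchedAvg, gibbsAvg_sum]
  exact integral_finsetSum T fun a _ => integrable_gibbsAvg N β s (g a)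

lemma quenchedAvg_mono {g₁ g₂ : (Fin s → ℕ → Bool) → ℝ} (h : ∀ σ, g₁ σ ≤ g₂ σ) :
    quenchedAvg ν N β s g₁ ≤ quenchedAvg ν N β s g₂ :=
  integral_mono (integrable_gibbsAvg N β s g₁) (integrable_gibbsAvg N β s g₂)
    fun _ => gibbsAvg_mono h

end Finite

variable [IsProbabilityMeasure ν]

lemma abs_quenchedAvg_le {g : (Fin s → ℕ → Bool) → ℝ} {C : ℝ} (h : ∀ σ, |g σ| ≤ C) :
    |quenchedAvg ν N β s g| ≤ C := by
  have hlow := quenchedAvg_mono (ν := ν) (N := N) (β := β) fun σ => neg_le_of_abs_le (h σ)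
  have hup := quenchedAvg_mono (ν := ν) (N := N) (β := β) fun σ => le_of_abs_le (h σ)
  rw [quenchedAvg_const] at hlow hup
  exact abs_le.2 ⟨hlow, hup⟩

lemma abs_quenchedAvg_sub_le {g₁ g₂ h : (Fin s → ℕ → Bool) → ℝ} {ε c : ℝ}
    (hg : ∀ σ, |g₁ σ - g₂ σ| ≤ ε + c * h σ) :
    |quenchedAvg ν N β s g₁ - quenchedAvg ν N β s g₂| ≤ ε + c * quenchedAvg ν N β s h := by
  have hbound : quenchedAvg ν N β s (fun σ => ε + c * h σ) = ε + c * quenchedAvg ν N β s h := by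
    rw [show (fun σ => ε + c * h σ) = (fun _ => ε) + fun σ => c * h σ from rfl, quenchedAvg_add,
      quenchedAvg_const, quenchedAvg_const_mul]
  have h₁₂ := quenchedAvg_mono (ν := ν) (N := N) (β := β) (g₁ := g₁ - g₂) fun σ =>
    (le_abs_self _).trans (hg σ)
  have h₂₁ := quenchedAvg_mono (ν := ν) (N := N) (β := β) (g₁ := g₂ - g₁) fun σ =>
    by simpa using (neg_le_abs (g₁ σ - g₂ σ)).trans (hg σ)
  rw [quenchedAvg_sub, hbound] at h₁₂ h₂₁
  exact abs_le.2 ⟨by linarith, h₁₂⟩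

end QuenchedAvg

lemma quenchedAvg_eq_integral (ν : Measure (ℕ × ℕ → ℝ)) (N : ℕ) (β : ℝ) (s : ℕ)
    {g : (Fin s → ℕ → Bool) → ℝ} (hg : Measurable g) :
    quenchedAvg ν N β s g = ∫ J, ∫ σ, g σ ∂(Measure.pi fun _ : Fin s => skGibbs N β J) ∂ν := by
  simp only [quenchedAvg, integral_pi_skGibbs N β _ s hg]

def pairsBelow (N : ℕ) : Finset (ℕ × ℕ) :=
  (Finset.range N ×ˢ Finset.range N).filter fun p => p.1 < p.2

lemma mem_pairsBelow {N : ℕ} {p : ℕ × ℕ} : p ∈ pairsBelow N ↔ p.1 < p.2 ∧ p.2 < N := by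
  simp only [pairsBelow, Finset.mem_filter, Finset.mem_product, Finset.mem_range]
  omega

lemma gibbsAvg_congr {N : ℕ} {β : ℝ} {J J' : ℕ × ℕ → ℝ} (h : ∀ p ∈ pairsBelow N, J p = J' p)
    (s : ℕ) (g : (Fin s → ℕ → Bool) → ℝ) : gibbsAvg N β J s g = gibbsAvg N β J' s g := by
  have hE : ∀ σ, skEnergy N J σ = skEnergy N J' σ := fun σ => by
    simp only [skEnergy]
    exact congrArg _ (Finset.sum_congr rfl fun p hp => by rw [h p hp])
  simp only [gibbsAvg, gibbsWeight, boltzmannFactor, hE]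

section SitePerm

variable {N : ℕ} {π : Equiv.Perm ℕ}

lemma apply_lt_iff_of_fix (hπ : ∀ a, N ≤ a → π a = a) (a : ℕ) : π a < N ↔ a < N := by
  constructor <;> intro h <;> by_contra! ha
  · rw [hπ a ha] at h; omega
  · rw [π.injective (hπ _ ha)] at ha; omega

lemma symm_apply_of_fix (hπ : ∀ a, N ≤ a → π a = a) (a : ℕ) (ha : N ≤ a) : π.symm a = a :=
  π.symm_apply_eq.2 (hπ a ha).symm

def sortPair (π : Equiv.Perm ℕ) (p : ℕ × ℕ) : ℕ × ℕ :=
  (min (π p.1) (π p.2), max (π p.1) (π p.2))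

lemma sortPair_mem (hπ : ∀ a, N ≤ a → π a = a) {p : ℕ × ℕ} (hp : p ∈ pairsBelow N) :
    sortPair π p ∈ pairsBelow N := by
  rw [mem_pairsBelow] at hp ⊢
  have h1 := (apply_lt_iff_of_fix hπ p.1).2 (by omega)
  have h2 := (apply_lt_iff_of_fix hπ p.2).2 hp.2
  have hne : π p.1 ≠ π p.2 := π.injective.ne hp.1.ne
  simp only [sortPair]
  omega

lemma sortPair_symm_sortPair {p : ℕ × ℕ} (hp : p.1 < p.2) :
    sortPair π.symm (sortPair π p) = p := by
  rcases le_total (π p.1) (π p.2) with h | h <;>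
    simp [sortPair, h, hp.le]

def pairPerm (hπ : ∀ a, N ≤ a → π a = a) : pairsBelow N ≃ pairsBelow N where
  toFun p := ⟨sortPair π p, sortPair_mem hπ p.2⟩
  invFun p := ⟨sortPair π.symm p, sortPair_mem (symm_apply_of_fix hπ) p.2⟩
  left_inv p := Subtype.ext (sortPair_symm_sortPair (mem_pairsBelow.1 p.2).1)
  right_inv p := Subtype.ext <| by
    simpa using sortPair_symm_sortPair (π := π.symm) (mem_pairsBelow.1 p.2).1

lemma skEnergy_comp_sortPair (hπ : ∀ a, N ≤ a → π a = a) (J : ℕ × ℕ → ℝ) (σ : ℕ → Bool) :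
    skEnergy N (J ∘ sortPair π) σ = skEnergy N J (σ ∘ π.symm) := by
  refine congrArg _ (Finset.sum_nbij' (sortPair π) (sortPair π.symm)
    (fun p hp => sortPair_mem hπ hp) (fun p hp => sortPair_mem (symm_apply_of_fix hπ) hp)
    (fun p hp => sortPair_symm_sortPair (mem_pairsBelow.1 hp).1)
    (fun p hp => by simpa using sortPair_symm_sortPair (π := π.symm) (mem_pairsBelow.1 hp).1)
    fun p _ => ?_)
  rcases le_total (π p.1) (π p.2) with h | h <;> simp [sortPair, h]
  ring

lemma extendN_restrict {σ : ℕ → Bool} (hσ : ∀ a, N ≤ a → σ a = true) :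
    extendN (fun b : Fin N => σ b) = σ := by
  funext a
  by_cases ha : a < N
  · simp [extendN, ha]
  · simp [extendN, ha, hσ a (not_lt.1 ha)]

lemma extendN_comp_of_fix (hπ : ∀ a, N ≤ a → π a = a) (τ : Fin N → Bool) :
    extendN (fun b : Fin N => extendN τ (π b)) = extendN τ ∘ π :=
  extendN_restrict (σ := extendN τ ∘ π) fun a ha => by simp [hπ a ha, extendN, not_lt.2 ha]

def relabelConfig (hπ : ∀ a, N ≤ a → π a = a) : (Fin N → Bool) ≃ (Fin N → Bool) where
  toFun τ b := extendN τ (π.symm b)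
  invFun τ b := extendN τ (π b)
  left_inv τ := funext fun b => by
    change extendN (fun b' : Fin N => extendN τ (π.symm b')) (π b) = τ b
    rw [extendN_comp_of_fix (symm_apply_of_fix hπ)]
    simp [extendN]
  right_inv τ := funext fun b => by
    change extendN (fun b' : Fin N => extendN τ (π b')) (π.symm b) = τ b
    rw [extendN_comp_of_fix hπ]
    simp [extendN]

lemma gibbsWeight_comp_sortPair (hπ : ∀ a, N ≤ a → π a = a) (β : ℝ) (J : ℕ × ℕ → ℝ)
    (τ : Fin N → Bool) :
    gibbsWeight N β (J ∘ sortPair π) τ = gibbsWeight N β J (relabelConfig hπ τ) := by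
  have hB : ∀ τ, boltzmannFactor N β (J ∘ sortPair π) τ
      = boltzmannFactor N β J (relabelConfig hπ τ) := fun τ => by
    simp only [boltzmannFactor, skEnergy_comp_sortPair hπ, relabelConfig, Equiv.coe_fn_mk,
      extendN_comp_of_fix (symm_apply_of_fix hπ)]
  simp only [gibbsWeight, hB, (relabelConfig hπ).sum_comp]

lemma gibbsAvg_comp_sortPair (hπ : ∀ a, N ≤ a → π a = a) (β : ℝ) (J : ℕ × ℕ → ℝ) (s : ℕ)
    (g : (Fin s → ℕ → Bool) → ℝ) :
    gibbsAvg N β (J ∘ sortPair π) s g = gibbsAvg N β J s (fun σ => g fun i => σ i ∘ π) := by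
  refine Fintype.sum_equiv (Equiv.piCongrRight fun _ => relabelConfig hπ) _ _ fun σ => ?_
  have hext : ∀ τ, extendN (relabelConfig hπ τ) ∘ π = extendN τ := fun τ => by
    change extendN (fun b : Fin N => extendN τ (π.symm b)) ∘ π = _
    rw [extendN_comp_of_fix (symm_apply_of_fix hπ)]
    simp [Function.comp_assoc]
  simp [gibbsWeight_comp_sortPair hπ, hext]

end SitePerm

lemma quenchedAvg_comp_perm {ν : Measure (ℕ × ℕ → ℝ)} (hν : stdGaussianProduct ν) {N : ℕ}
    {π : Equiv.Perm ℕ} (hπ : ∀ a, N ≤ a → π a = a) (β : ℝ) (s : ℕ)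
    (g : (Fin s → ℕ → Bool) → ℝ) :
    quenchedAvg ν N β s (fun σ => g fun i => σ i ∘ π) = quenchedAvg ν N β s g := by
  let extendByZero (c : pairsBelow N → ℝ) (p : ℕ × ℕ) : ℝ :=
    if h : p ∈ pairsBelow N then c ⟨p, h⟩ else 0
  have hext : Measurable extendByZero := measurable_pi_lambda _ fun p => by
    by_cases h : p ∈ pairsBelow N <;> simp [extendByZero, h, measurable_pi_apply]
  let Φ (c : pairsBelow N → ℝ) : ℝ := gibbsAvg N β (extendByZero c) s g
  have hΦ : Measurable Φ := (continuous_gibbsAvg N β s g).measurable.comp hext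
  calc quenchedAvg ν N β s (fun σ => g fun i => σ i ∘ π)
      = ∫ J, Φ (fun p => J (pairPerm hπ p)) ∂ν := by
        refine integral_congr_ae (.of_forall fun J => ?_)
        simp only [← gibbsAvg_comp_sortPair hπ]
        exact gibbsAvg_congr (fun p hp => by simp [extendByZero, hp, pairPerm]) s g
    _ = ∫ J, Φ (fun p => J p) ∂ν := integral_comp_perm_of_map_eq_pi (hν.2 _) _ hΦ
    _ = quenchedAvg ν N β s g :=
        integral_congr_ae (.of_forall fun J =>
          gibbsAvg_congr (fun p hp => by simp [extendByZero, hp]) s g)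

def siteOverlap {s : ℕ} (i j : Fin s) (x : ℕ) (σ : Fin s → ℕ → Bool) : ℝ :=
  spin (σ i x) * spin (σ j x)

lemma abs_siteOverlap {s : ℕ} (i j : Fin s) (x : ℕ) (σ : Fin s → ℕ → Bool) :
    |siteOverlap i j x σ| = 1 := by
  simp [siteOverlap, abs_mul, abs_spin]

lemma overlapN_mul_overlapN {s : ℕ} (i j : Fin s) (a b : ℕ) (σ : Fin s → ℕ → Bool) :
    overlapN a (σ i) (σ j) * overlapN b (σ i) (σ j) = ∑ x ∈ Finset.range a,
      ∑ y ∈ Finset.range b, ((a : ℝ) * b)⁻¹ * (siteOverlap i j x σ * siteOverlap i j y σ) := by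
  rw [overlapN, overlapN, mul_mul_mul_comm, Finset.sum_mul_sum, Finset.mul_sum, mul_inv]
  simp_rw [Finset.mul_sum]
  rfl

lemma sum_range_sum_range_ite {a b : ℕ} (hab : a ≤ b) (c : ℝ) :
    ∑ x ∈ Finset.range a, ∑ y ∈ Finset.range b, (if x = y then 1 else c) =
      a * (b * c + (1 - c)) := by
  have hrow : ∀ x ∈ Finset.range a,
      ∑ y ∈ Finset.range b, (if x = y then 1 else c) = b * c + (1 - c) := fun x hx => by
    have hxb : x < b := (Finset.mem_range.1 hx).trans_le hab
    simp_rw [show ∀ y, (if x = y then 1 else c) = c + if x = y then 1 - c else 0 by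
      intro y; split_ifs <;> ring]
    simp [Finset.sum_add_distrib, hxb]
  rw [Finset.sum_congr rfl hrow, Finset.sum_const, Finset.card_range, nsmul_eq_mul]

section SiteCorrelation

variable (ν : Measure (ℕ × ℕ → ℝ)) (N : ℕ) (β : ℝ) {s : ℕ} (i j : Fin s)

def siteCorr (x y : ℕ) : ℝ :=
  quenchedAvg ν N β s fun σ => siteOverlap i j x σ * siteOverlap i j y σ

variable {ν}

lemma siteCorr_self [IsProbabilityMeasure ν] (x : ℕ) : siteCorr ν N β i j x x = 1 := by
  have hsq : ∀ σ, siteOverlap i j x σ * siteOverlap i j x σ = 1 := fun σ => by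
    rw [← abs_mul_abs_self, abs_siteOverlap, one_mul]
  simp only [siteCorr, hsq, quenchedAvg_const]

lemma abs_siteCorr_le [IsProbabilityMeasure ν] (x y : ℕ) : |siteCorr ν N β i j x y| ≤ 1 :=
  abs_quenchedAvg_le fun σ => by rw [abs_mul, abs_siteOverlap, abs_siteOverlap, one_mul]

lemma siteCorr_eq_siteCorr_zero_one (hν : stdGaussianProduct ν) {x y : ℕ} (hx : x < N)
    (hy : y < N) (hxy : x ≠ y) : siteCorr ν N β i j x y = siteCorr ν N β i j 0 1 := by
  obtain ⟨π, h0, h1, hπ⟩ := exists_perm_zero_one hx hy hxy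
  rw [siteCorr, siteCorr,
    ← quenchedAvg_comp_perm hν hπ β s fun σ => siteOverlap i j 0 σ * siteOverlap i j 1 σ]
  simp only [siteOverlap, Function.comp_apply, h0, h1]

lemma quenchedAvg_overlapN_mul_overlapN (hν : stdGaussianProduct ν) {a b : ℕ} (ha : 1 ≤ a)
    (hab : a ≤ b) (hbN : b ≤ N) :
    quenchedAvg ν N β s (fun σ => overlapN a (σ i) (σ j) * overlapN b (σ i) (σ j)) =
      siteCorr ν N β i j 0 1 + (1 - siteCorr ν N β i j 0 1) / b := by
  have := hν.1
  set c := siteCorr ν N β i j 0 1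
  have hcorr : ∀ x ∈ Finset.range a, ∀ y ∈ Finset.range b,
      (quenchedAvg ν N β s fun σ => siteOverlap i j x σ * siteOverlap i j y σ) =
        if x = y then 1 else c := fun x hx y hy => by
    simp only [Finset.mem_range] at hx hy
    change siteCorr ν N β i j x y = _
    split_ifs with hxy
    · rw [hxy, siteCorr_self]
    · exact siteCorr_eq_siteCorr_zero_one N β i j hν (by omega) (by omega) hxy
  simp_rw [overlapN_mul_overlapN, quenchedAvg_sum, quenchedAvg_const_mul]
  rw [Finset.sum_congr rfl fun x hx => Finset.sum_congr rfl fun y hy => by rw [hcorr x hx y hy]]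
  simp_rw [← Finset.mul_sum]
  rw [sum_range_sum_range_ite hab]
  have : (a : ℝ) ≠ 0 := by positivity
  have : (b : ℝ) ≠ 0 := by norm_cast; omega
  field_simp

lemma quenchedAvg_sq_overlapN_sub_le (hν : stdGaussianProduct ν) {n m : ℕ} (hn : 1 ≤ n)
    (hnm : n ≤ m) (hmN : m ≤ N) :
    quenchedAvg ν N β s (fun σ => (overlapN m (σ i) (σ j) - overlapN n (σ i) (σ j)) ^ 2) ≤
      2 / n := by
  have := hν.1
  have hsq : (fun σ : Fin s → ℕ → Bool =>
      (overlapN m (σ i) (σ j) - overlapN n (σ i) (σ j)) ^ 2) =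
      ((fun σ => overlapN m (σ i) (σ j) * overlapN m (σ i) (σ j)) -
        fun σ => 2 * (overlapN n (σ i) (σ j) * overlapN m (σ i) (σ j))) +
      fun σ => overlapN n (σ i) (σ j) * overlapN n (σ i) (σ j) := by
    funext σ
    simp only [Pi.add_apply, Pi.sub_apply]
    ring
  rw [hsq, quenchedAvg_add, quenchedAvg_sub, quenchedAvg_const_mul,
    quenchedAvg_overlapN_mul_overlapN N β i j hν (by omega) le_rfl hmN,
    quenchedAvg_overlapN_mul_overlapN N β i j hν hn hnm hmN,
    quenchedAvg_overlapN_mul_overlapN N β i j hν hn le_rfl (hnm.trans hmN)]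
  have hc := abs_le.1 (abs_siteCorr_le N β i j 0 1 (ν := ν))
  have hinv : (m : ℝ)⁻¹ ≤ (n : ℝ)⁻¹ := inv_anti₀ (by positivity) (by exact_mod_cast hnm)
  calc _ = (1 - siteCorr ν N β i j 0 1) * ((n : ℝ)⁻¹ - (m : ℝ)⁻¹) := by ring
    _ ≤ 2 * (n : ℝ)⁻¹ :=
        mul_le_mul (by linarith) (sub_le_self _ (by positivity)) (by linarith) (by norm_num)
    _ = 2 / n := by ring

end SiteCorrelation

lemma quenchedAvg_sum_sq_overlaps_sub_le {ν : Measure (ℕ × ℕ → ℝ)} (hν : stdGaussianProduct ν)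
    (β : ℝ) (s : ℕ) {N n m : ℕ} (hn : 1 ≤ n) (hnm : n ≤ m) (hmN : m ≤ N) :
    quenchedAvg ν N β s (fun σ => ∑ p, (overlaps s m σ p - overlaps s n σ p) ^ 2) ≤
      Fintype.card (Pairs s) * (2 / n) := by
  have := hν.1
  rw [quenchedAvg_sum]
  calc _ ≤ ∑ _p : Pairs s, 2 / (n : ℝ) := Finset.sum_le_sum fun p _ =>
        quenchedAvg_sq_overlapN_sub_le N β p.1.1 p.1.2 hν hn hnm hmN
    _ = _ := by simp

lemma exists_abs_quenchedAvg_sub_le {ν : Measure (ℕ × ℕ → ℝ)} (hν : stdGaussianProduct ν)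
    (β : ℝ) {s : ℕ} {F : (Pairs s → ℝ) → ℝ} (hF : ContinuousOn F (unitCube _)) {ε : ℝ}
    (hε : 0 < ε) :
    ∃ n₀, ∀ N n m, n₀ ≤ n → n ≤ m → m ≤ N →
      |quenchedAvg ν N β s (F ∘ overlaps s m) - quenchedAvg ν N β s (F ∘ overlaps s n)| ≤ ε := by
  have := hν.1
  obtain ⟨c, hc, hFc⟩ := exists_abs_sub_le_add_mul_sum_sq (isCompact_unitCube _) hF (half_pos hε)
  set P : ℝ := (Fintype.card (Pairs s) : ℝ)
  obtain ⟨n₀, hn₀⟩ := exists_nat_gt (4 * c * P / ε)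
  refine ⟨n₀ + 1, fun N n m hn hnm hmN => ?_⟩
  have hnpos : (0 : ℝ) < n := by exact_mod_cast (show 0 < n by omega)
  have hsmall : c * (P * (2 / n)) ≤ ε / 2 := by
    have : 4 * c * P / ε < n := hn₀.trans (by exact_mod_cast (show n₀ < n by omega))
    rw [div_lt_iff₀ hε] at this
    rw [show c * (P * (2 / n)) = 4 * c * P / n / 2 by ring, div_le_div_iff_of_pos_right two_pos,
      div_le_iff₀ hnpos]
    linarith
  calc _ ≤ ε / 2 + c * quenchedAvg ν N β s
        (fun σ => ∑ p, (overlaps s m σ p - overlaps s n σ p) ^ 2) :=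
        abs_quenchedAvg_sub_le fun σ =>
          hFc _ (overlaps_mem_unitCube s m σ) _ (overlaps_mem_unitCube s n σ)
    _ ≤ ε / 2 + c * (P * (2 / n)) := by
        gcongr
        exact quenchedAvg_sum_sq_overlaps_sub_le hν β s (by omega) hnm hmN
    _ ≤ ε := by linarith

theorem sk_rost_limits_agree_general (β : ℝ)
    (ν : Measure (ℕ × ℕ → ℝ)) (hν : stdGaussianProduct ν)
    (N : ℕ → ℕ) (hN : StrictMono N)
    (κ : (ℕ × ℕ → ℝ) → Measure (Measure (ℕ → Bool)))
    -- convergence of the Gibbs measures to the metastate along (N_k)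
    (hconv : ∀ (s : ℕ) (A : Finset (ℕ × ℕ)) (W : Finset ℕ)
      (f : (ℕ × ℕ → ℝ) → (Fin s → ℕ → Bool) → ℝ),
      Continuous (fun p : (ℕ × ℕ → ℝ) × (Fin s → ℕ → Bool) => f p.1 p.2) →
      (∃ C, ∀ J σ, |f J σ| ≤ C) →
      (∀ J J' σ σ', (∀ e ∈ A, J e = J' e) →
        (∀ i : Fin s, ∀ x ∈ W, σ i x = σ' i x) → f J σ = f J' σ') →
      Tendsto
        (fun k => ∫ J, (∫ σ, f J σ ∂(Measure.pi fun _ : Fin s => skGibbs (N k) β J)) ∂ν)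
        atTop
        (nhds (∫ J, (∫ Γ, (∫ σ, f J σ ∂(Measure.pi fun _ : Fin s => Γ)) ∂(κ J)) ∂ν))) :
    ∀ (s : ℕ) (F : (Pairs s → ℝ) → ℝ),
      ContinuousOn F {g : Pairs s → ℝ | ∀ p, g p ∈ Set.Icc (-1 : ℝ) 1} →
      ∃ ℓ : ℝ,
        Tendsto
          (fun k => ∫ J,
            (∫ σ, F (fun p => overlapN (N k) (σ p.1.1) (σ p.1.2))
              ∂(Measure.pi fun _ : Fin s => skGibbs (N k) β J)) ∂ν)
          atTop (nhds ℓ) ∧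
        Tendsto
          (fun M => ∫ J, (∫ Γ,
            (∫ σ, F (fun p => overlapN M (σ p.1.1) (σ p.1.2))
              ∂(Measure.pi fun _ : Fin s => Γ)) ∂(κ J)) ∂ν)
          atTop (nhds ℓ) := by
  intro s F hF
  obtain ⟨C, hC⟩ := (isCompact_unitCube (Pairs s)).exists_bound_of_continuousOn hF
  have hcont (n : ℕ) : Continuous (F ∘ overlaps s n) :=
    hF.comp_continuous (continuous_overlaps s n) (overlaps_mem_unitCube s n)
  refine exists_tendsto_diag_of_uniformCauchy (a := fun k n =>
    ∫ J, ∫ σ, F (overlaps s n σ) ∂(Measure.pi fun _ : Fin s => skGibbs (N k) β J) ∂ν)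
    hN.tendsto_atTop (fun n => ?_) fun ε hε => ?_
  · exact hconv s ∅ (Finset.range n) (fun _ σ => F (overlaps s n σ))
      ((hcont n).comp continuous_snd) ⟨C, fun _ σ => hC _ (overlaps_mem_unitCube s n σ)⟩
      fun _ _ σ σ' _ hσ => by
        rw [overlaps_congr fun i x hx => hσ i x (Finset.mem_range.2 hx)]
  · obtain ⟨n₀, h⟩ := exists_abs_quenchedAvg_sub_le hν β hF hε
    refine ⟨n₀, fun k n m hn hnm hmk => ?_⟩
    have := h (N k) n m hn hnm hmk
    rwa [quenchedAvg_eq_integral ν _ β s (hcont m).measurable,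
      quenchedAvg_eq_integral ν _ β s (hcont n).measurable] at this

/-- for the SK model, the "simultaneous-limit" ROSt agrees with the
metastate ROSt.  If along `(N_k)` the SK Gibbs measures converge to the metastate `κ_J` in
the sense of the metastate theorem, then for every `s` and every continuous `F`, the
simultaneous limit `lim_k ∫ν(dJ) G_{N_k,β,J}^{⊗s}(F(R^{N_k}(σ^i,σ^j)))` and the iterated
limit `lim_N ∫ν(dJ)∫κ_J(dΓ) Γ^{⊗s}(F(R^N(σ^i,σ^j)))` both exist and are equal. -/
theorem sk_rost_limits_agree (β : ℝ) (hβ : 0 < β)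
    (ν : Measure (ℕ × ℕ → ℝ)) (hν : stdGaussianProduct ν)
    (N : ℕ → ℕ) (hN : StrictMono N)
    (κ : (ℕ × ℕ → ℝ) → Measure (Measure (ℕ → Bool))) (hκmeas : Measurable κ)
    (hκprob : ∀ J, IsProbabilityMeasure (κ J))
    (hκprob' : ∀ J, ∀ᵐ Γ ∂(κ J), IsProbabilityMeasure Γ)
    -- convergence of the Gibbs measures to the metastate along (N_k)
    (hconv : ∀ (s : ℕ) (A : Finset (ℕ × ℕ)) (W : Finset ℕ)
      (f : (ℕ × ℕ → ℝ) → (Fin s → ℕ → Bool) → ℝ),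
      Continuous (fun p : (ℕ × ℕ → ℝ) × (Fin s → ℕ → Bool) => f p.1 p.2) →
      (∃ C, ∀ J σ, |f J σ| ≤ C) →
      (∀ J J' σ σ', (∀ e ∈ A, J e = J' e) →
        (∀ i : Fin s, ∀ x ∈ W, σ i x = σ' i x) → f J σ = f J' σ') →
      Tendsto
        (fun k => ∫ J, (∫ σ, f J σ ∂(Measure.pi fun _ : Fin s => skGibbs (N k) β J)) ∂ν)
        atTop
        (nhds (∫ J, (∫ Γ, (∫ σ, f J σ ∂(Measure.pi fun _ : Fin s => Γ)) ∂(κ J)) ∂ν))) :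
    ∀ (s : ℕ) (F : (Pairs s → ℝ) → ℝ),
      ContinuousOn F {g : Pairs s → ℝ | ∀ p, g p ∈ Set.Icc (-1 : ℝ) 1} →
      ∃ ℓ : ℝ,
        Tendsto
          (fun k => ∫ J,
            (∫ σ, F (fun p => overlapN (N k) (σ p.1.1) (σ p.1.2))
              ∂(Measure.pi fun _ : Fin s => skGibbs (N k) β J)) ∂ν)
          atTop (nhds ℓ) ∧
        Tendsto
          (fun M => ∫ J, (∫ Γ,
            (∫ σ, F (fun p => overlapN M (σ p.1.1) (σ p.1.2))
              ∂(Measure.pi fun _ : Fin s => Γ)) ∂(κ J)) ∂ν)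
          atTop (nhds ℓ) :=
  sk_rost_limits_agree_general β ν hν N hN κ hconv
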